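/- arXiv:1512.03767 — 2 statements merged into one kernel-verified Lean document; each statement's English description precedes it below -/
import Mathlib

section
/- For all φ₀, φ₁ with 0 < φ₀ < φ₁ < π/2, the map T_{C_r}(α) := 2T(α) + T₁(α, φ₀) − T₁(α, φ₁) is strictly increasing on (φ₁, π/2). -/
open Real

/-- The time map `T(α) = ∫₀^α dx / √(cos 2x − cos 2α)`. -/
noncomputable def timeMapT (α : ℝ) : ℝ :=
  ∫ x in (0:ℝ)..α, 1 / Real.sqrt (Real.cos (2 * x) - Real.cos (2 * α))

/-- The time map `T₁(α, φ) = ∫₀^φ dx / √(cos 2x − cos 2α)`. -/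
noncomputable def timeMapT1 (α φ : ℝ) : ℝ :=
  ∫ x in (0:ℝ)..φ, 1 / Real.sqrt (Real.cos (2 * x) - Real.cos (2 * α))

/-!
Writing `f_α(x) = 1 / √(cos 2x − cos 2α)`, the map is `2 T(α) − ∫_{φ₀}^{φ₁} f_α`. The integrand
`f_α(x)` strictly decreases in `α` for fixed `x`, so it suffices that `T` is nondecreasing.
For `α = t β` with `t ∈ (0, 1]`, substituting `x = t y` gives `T(α) = ∫₀^β t f_α(t y) dy`, and
`cos 2x − cos 2α = 2 sin (α + x) sin (α − x)` together with the concavity bound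
`t sin s ≤ sin (t s)` on `[0, π]` yields `t f_α(t y) ≤ f_β(y)`.
-/

open Set MeasureTheory intervalIntegral

noncomputable def timeIntegrand (α x : ℝ) : ℝ :=
  1 / √(cos (2 * x) - cos (2 * α))

lemma mul_sin_le_sin_mul {t z : ℝ} (ht₀ : 0 ≤ t) (ht₁ : t ≤ 1) (hz₀ : 0 ≤ z) (hzπ : z ≤ π) :
    t * sin z ≤ sin (t * z) := by
  have h := strictConcaveOn_sin_Icc.concaveOn.2 (left_mem_Icc.2 pi_pos.le) ⟨hz₀, hzπ⟩
    (sub_nonneg.2 ht₁) ht₀ (by ring)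
  simpa using h

lemma cos_two_mul_sub_cos_two_mul (x c : ℝ) :
    cos (2 * x) - cos (2 * c) = 2 * sin (c + x) * sin (c - x) := by
  rw [cos_sub_cos, show (2 * x + 2 * c) / 2 = c + x by ring,
    show (2 * x - 2 * c) / 2 = -(c - x) by ring, sin_neg]
  ring

lemma cos_two_mul_sub_cos_two_mul_pos {x c : ℝ} (hx : 0 ≤ x) (hxc : x < c) (hc : c ≤ π / 2) :
    0 < cos (2 * x) - cos (2 * c) := by
  have := cos_lt_cos_of_nonneg_of_le_pi (x := 2 * x) (y := 2 * c) (by linarith) (by linarith)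
    (by linarith)
  linarith

/-- Bounds `timeIntegrand c x` by a multiple of `(c - x) ^ (-1/2)`, hence makes it integrable. -/
lemma mul_sub_le_cos_two_mul_sub_cos_two_mul {x c : ℝ} (hc₀ : 0 < c) (hc : c < π / 2)
    (hx : 0 ≤ x) (hxc : x ≤ c) :
    sin (2 * c) ^ 2 / (2 * c) * (c - x) ≤ cos (2 * x) - cos (2 * c) := by
  have hs : 0 < sin (2 * c) := sin_pos_of_pos_of_lt_pi (by linarith) (by linarith)
  have hplus : sin (2 * c) / 2 ≤ sin (c + x) := by
    have := mul_sin_le_sin_mul (t := (c + x) / (2 * c)) (z := 2 * c) (by positivity)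
      ((div_le_one (by positivity)).2 (by linarith)) (by linarith) (by linarith)
    rw [div_mul_cancel₀ _ (by positivity)] at this
    refine le_trans ?_ this
    rw [div_mul_eq_mul_div, div_le_div_iff₀ two_pos (by positivity)]
    nlinarith
  have hminus : (c - x) / (2 * c) * sin (2 * c) ≤ sin (c - x) := by
    have := mul_sin_le_sin_mul (t := (c - x) / (2 * c)) (z := 2 * c)
      (div_nonneg (by linarith) (by positivity))
      ((div_le_one (by positivity)).2 (by linarith)) (by linarith) (by linarith)
    rwa [div_mul_cancel₀ _ (by positivity)] at this
  calc sin (2 * c) ^ 2 / (2 * c) * (c - x)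
      = 2 * (sin (2 * c) / 2) * ((c - x) / (2 * c) * sin (2 * c)) := by ring
    _ ≤ 2 * sin (c + x) * sin (c - x) := by
        have hfactor : 0 ≤ (c - x) / (2 * c) * sin (2 * c) :=
          mul_nonneg (div_nonneg (by linarith) (by positivity)) hs.le
        nlinarith [mul_le_mul hplus hminus hfactor (by linarith)]
    _ = cos (2 * x) - cos (2 * c) := (cos_two_mul_sub_cos_two_mul x c).symm

lemma sq_mul_cos_sub_cos_le {t y c : ℝ} (ht₀ : 0 ≤ t) (ht₁ : t ≤ 1) (hy : 0 ≤ y) (hyc : y ≤ c)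
    (hc : c ≤ π / 2) :
    t ^ 2 * (cos (2 * y) - cos (2 * c)) ≤ cos (2 * (t * y)) - cos (2 * (t * c)) := by
  have hplus := mul_sin_le_sin_mul (z := c + y) ht₀ ht₁ (by linarith) (by linarith)
  have hminus := mul_sin_le_sin_mul (z := c - y) ht₀ ht₁ (by linarith) (by linarith)
  have hsin_add : 0 ≤ sin (c + y) := sin_nonneg_of_nonneg_of_le_pi (by linarith) (by linarith)
  have hsin_sub : 0 ≤ sin (c - y) := sin_nonneg_of_nonneg_of_le_pi (by linarith) (by linarith)
  rw [cos_two_mul_sub_cos_two_mul, cos_two_mul_sub_cos_two_mul, ← mul_add, ← mul_sub]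
  calc t ^ 2 * (2 * sin (c + y) * sin (c - y))
      = 2 * (t * sin (c + y)) * (t * sin (c - y)) := by ring
    _ ≤ 2 * sin (t * (c + y)) * sin (t * (c - y)) := by
        gcongr
        linarith [(mul_nonneg ht₀ hsin_add).trans hplus]

lemma continuousOn_timeIntegrand {c : ℝ} (hc : c ≤ π / 2) :
    ContinuousOn (timeIntegrand c) (Ico 0 c) := by
  refine continuousOn_const.div (by fun_prop) fun x hx => ?_
  exact (sqrt_pos.2 (cos_two_mul_sub_cos_two_mul_pos hx.1 hx.2 hc)).ne'

lemma intervalIntegrable_timeIntegrand_of_lt {a b c : ℝ} (ha : 0 ≤ a) (hab : a ≤ b) (hbc : b < c)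
    (hc : c ≤ π / 2) : IntervalIntegrable (timeIntegrand c) volume a b :=
  ((continuousOn_timeIntegrand hc).mono
    (Icc_subset_Ico_iff hab |>.2 ⟨ha, hbc⟩)).intervalIntegrable_of_Icc hab

lemma intervalIntegrable_timeIntegrand {c : ℝ} (hc₀ : 0 < c) (hc : c < π / 2) :
    IntervalIntegrable (timeIntegrand c) volume 0 c := by
  set M := sin (2 * c) ^ 2 / (2 * c)
  have hM : 0 < M := by
    have : 0 < sin (2 * c) := sin_pos_of_pos_of_lt_pi (by linarith) (by linarith)
    positivity
  have hbound : IntervalIntegrable (fun x => (√M)⁻¹ * (c - x) ^ (-(1 / 2) : ℝ)) volume 0 c := by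
    have h := (intervalIntegrable_rpow' (by norm_num : (-1 : ℝ) < -(1 / 2))
      (a := c) (b := 0)).comp_sub_left c
    simp only [sub_self, sub_zero] at h
    exact h.const_mul _
  refine hbound.mono_fun'
    (by unfold timeIntegrand; fun_prop : Measurable (timeIntegrand c)).aestronglyMeasurable ?_
  rw [uIoc_of_le hc₀.le]
  refine (ae_restrict_mem measurableSet_Ioc).mono fun x ⟨hx₀, hxc⟩ => ?_
  dsimp only
  rw [Real.norm_of_nonneg (by unfold timeIntegrand; positivity)]
  rcases hxc.eq_or_lt with rfl | hxc
  · simp [timeIntegrand]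
  have hcx : 0 < c - x := sub_pos.2 hxc
  rw [rpow_neg hcx.le, ← sqrt_eq_rpow, ← mul_inv, ← sqrt_mul hM.le, timeIntegrand, one_div]
  exact inv_anti₀ (sqrt_pos.2 (mul_pos hM hcx))
    (sqrt_le_sqrt (mul_sub_le_cos_two_mul_sub_cos_two_mul hc₀ hc hx₀.le hxc.le))

lemma mul_timeIntegrand_mul_le {t y c : ℝ} (ht₀ : 0 < t) (ht₁ : t ≤ 1) (hy : 0 ≤ y) (hyc : y < c)
    (hc : c ≤ π / 2) : t * timeIntegrand (t * c) (t * y) ≤ timeIntegrand c y := by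
  have hpos : 0 < t ^ 2 * (cos (2 * y) - cos (2 * c)) :=
    mul_pos (by positivity) (cos_two_mul_sub_cos_two_mul_pos hy hyc hc)
  calc t * timeIntegrand (t * c) (t * y)
      = t / √(cos (2 * (t * y)) - cos (2 * (t * c))) := mul_one_div _ _
    _ ≤ t / √(t ^ 2 * (cos (2 * y) - cos (2 * c))) :=
        div_le_div_of_nonneg_left ht₀.le (sqrt_pos.2 hpos)
          (sqrt_le_sqrt (sq_mul_cos_sub_cos_le ht₀.le ht₁ hy hyc.le hc))
    _ = timeIntegrand c y := by
        rw [sqrt_mul (sq_nonneg t), sqrt_sq ht₀.le, timeIntegrand, div_mul_cancel_left₀ ht₀.ne',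
          one_div]

lemma timeMapT_monotoneOn : MonotoneOn timeMapT (Ioo 0 (π / 2)) := by
  intro α hα β hβ hαβ
  set t := α / β
  have ht₀ : 0 < t := div_pos hα.1 hβ.1
  have htβ : t * β = α := div_mul_cancel₀ α hβ.1.ne'
  have hsubst : ∫ y in 0..β, t * timeIntegrand α (t * y) = timeMapT α := by
    rw [intervalIntegral.integral_const_mul, integral_comp_mul_left (timeIntegrand α) ht₀.ne', mul_zero, htβ,
      smul_eq_mul, mul_inv_cancel_left₀ ht₀.ne']
    rfl
  have hint : IntervalIntegrable (fun y => t * timeIntegrand α (t * y)) volume 0 β := by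
    have h := (intervalIntegrable_timeIntegrand hα.1 hα.2).comp_mul_left (c := t)
    rw [zero_div, div_div_cancel₀ hα.1.ne'] at h
    exact h.const_mul t
  rw [← hsubst]
  refine integral_mono_on_of_le_Ioo hβ.1.le hint (intervalIntegrable_timeIntegrand hβ.1 hβ.2)
    fun y hy => ?_
  have h := mul_timeIntegrand_mul_le ht₀ ((div_le_one hβ.1).2 hαβ) hy.1.le hy.2 hβ.2.le
  rwa [htβ] at h

lemma timeIntegrand_lt_timeIntegrand {x α β : ℝ} (hx : 0 ≤ x) (hxα : x < α) (hαβ : α < β)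
    (hβ : β ≤ π / 2) : timeIntegrand β x < timeIntegrand α x := by
  have hcos : cos (2 * β) < cos (2 * α) :=
    cos_lt_cos_of_nonneg_of_le_pi (by linarith) (by linarith) (by linarith)
  exact one_div_lt_one_div_of_lt (sqrt_pos.2 (cos_two_mul_sub_cos_two_mul_pos hx hxα
    (hαβ.le.trans hβ))) (sqrt_lt_sqrt (cos_two_mul_sub_cos_two_mul_pos hx hxα
    (hαβ.le.trans hβ)).le (sub_lt_sub_left hcos _))

lemma integral_timeIntegrand_strictAntiOn {a b : ℝ} (ha : 0 ≤ a) (hab : a < b) :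
    StrictAntiOn (fun α => ∫ x in a..b, timeIntegrand α x) (Ioc b (π / 2)) := by
  intro α hα β hβ hαβ
  have hcont : ∀ γ ∈ Ioc b (π / 2), ContinuousOn (timeIntegrand γ) (Icc a b) := fun γ hγ =>
    (continuousOn_timeIntegrand hγ.2).mono ((Icc_subset_Ico_iff hab.le).2 ⟨ha, hγ.1⟩)
  refine integral_lt_integral_of_continuousOn_of_le_of_exists_lt hab (hcont β hβ) (hcont α hα)
    (fun x hx => (timeIntegrand_lt_timeIntegrand (ha.trans hx.1.le) (hx.2.trans_lt hα.1) hαβ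
      hβ.2).le) ⟨b, right_mem_Icc.2 hab.le, ?_⟩
  exact timeIntegrand_lt_timeIntegrand (ha.trans hab.le) hα.1 hαβ hβ.2

lemma timeMapT1_sub_timeMapT1 {α φ₀ φ₁ : ℝ} (h₀ : 0 ≤ φ₀) (h₀₁ : φ₀ ≤ φ₁) (h₁ : φ₁ < α)
    (hα : α ≤ π / 2) :
    timeMapT1 α φ₁ - timeMapT1 α φ₀ = ∫ x in φ₀..φ₁, timeIntegrand α x :=
  integral_interval_sub_left (intervalIntegrable_timeIntegrand_of_lt le_rfl (h₀.trans h₀₁) h₁ hα)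
    (intervalIntegrable_timeIntegrand_of_lt le_rfl h₀ (h₀₁.trans_lt h₁) hα)

theorem timeMapTCr_strictMono_general (φ₀ φ₁ : ℝ) (h₀ : 0 < φ₀) (h₀₁ : φ₀ < φ₁) :
    StrictMonoOn (fun α => 2 * timeMapT α + timeMapT1 α φ₀ - timeMapT1 α φ₁)
      (Set.Ioo φ₁ (π / 2)) := by
  intro α hα β hβ hαβ
  have hα₀ : 0 < α := h₀.trans (h₀₁.trans hα.1)
  have hT := timeMapT_monotoneOn ⟨hα₀, hα.2⟩ ⟨hα₀.trans hαβ, hβ.2⟩ hαβ.le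
  have hmiddle := integral_timeIntegrand_strictAntiOn h₀.le h₀₁ ⟨hα.1, hα.2.le⟩
    ⟨hβ.1, hβ.2.le⟩ hαβ
  have hsplitα := timeMapT1_sub_timeMapT1 h₀.le h₀₁.le hα.1 hα.2.le
  have hsplitβ := timeMapT1_sub_timeMapT1 h₀.le h₀₁.le hβ.1 hβ.2.le
  dsimp only at hmiddle ⊢
  linarith

/-- For `0 < φ₀ < φ₁ < π/2`, the map
`T_{C_r}(α) = 2T(α) + T₁(α, φ₀) − T₁(α, φ₁)` is strictly increasing on
`(φ₁, π/2)`. -/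
theorem timeMapTCr_strictMono (φ₀ φ₁ : ℝ) (h₀ : 0 < φ₀) (h₀₁ : φ₀ < φ₁)
    (h₁ : φ₁ < π / 2) :
    StrictMonoOn (fun α => 2 * timeMapT α + timeMapT1 α φ₀ - timeMapT1 α φ₁)
      (Set.Ioo φ₁ (π / 2)) :=
  timeMapTCr_strictMono_general φ₀ φ₁ h₀ h₀₁
end

section
/- For all φ₀, φ₁ with 0 < φ₀ < φ₁ < π/2, the map T̃_{C_ℓ}(ã) := √2 ∫₀^{π/2} dθ/√(1 − ã sin²θ) + (1/√2) ∫_{φ₀}^{φ₁} dx/√(ã − sin²x) satisfies: T̃_{C_ℓ}(ã) → +∞ as ã → 1⁻; T̃_{C_ℓ}(ã) → T^* := 3T(φ₁) − T₁(φ₁, φ₀) as ã → (sin²φ₁)⁺; and there exists ε > 0 such that T̃_{C_ℓ}(ã) < T^* for all ã ∈ (sin²φ₁, sin²φ₁ + ε). -/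
open Real Filter

/-- The map `T̃_{C_ℓ}(ã) = √2 ∫₀^{π/2} dθ/√(1 − ã sin²θ)
 + (1/√2) ∫_{φ₀}^{φ₁} dx/√(ã − sin²x)`. -/
noncomputable def timeMapTClTilde (φ₀ φ₁ a : ℝ) : ℝ :=
  Real.sqrt 2 * (∫ θ in (0:ℝ)..(π / 2), 1 / Real.sqrt (1 - a * Real.sin θ ^ 2)) +
    (1 / Real.sqrt 2) * ∫ x in φ₀..φ₁, 1 / Real.sqrt (a - Real.sin x ^ 2)

/-!
Write `b = sin² φ₁` and `T̃(a) = √2 K(a) + I(a) / √2`, where `K` is the complete elliptic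
integral of the first kind and `I(a) = ∫_{φ₀}^{φ₁} dx / √(a − sin² x)`.

Since `cos 2x − cos 2α = 2 (sin² α − sin² x)`, both `T` and `T₁` are integrals of
`1 / √(sin² φ₁ − sin² x)`, and the pendulum substitution `sin x = sin φ₁ sin θ` turns the one
over `[0, φ₁]` into `K(b)`; hence `T̃(b) = 3 T(φ₁) − T₁(φ₁, φ₀)`.

As `a → 1⁻`, comparing `1 − a sin² θ ≤ (π/2 − θ)² + (1 − a)` gives
`K(a) ≥ arsinh (π / (2 √(1 − a))) → ∞`. As `a → b⁺`, `K` is Lipschitz, so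
`K(a) − K(b) = O(a − b)`, whereas the square-root singularity of the integrand of `I` at `φ₁`
(where `sin² φ₁ − sin² x ≤ 2 (φ₁ − x)`) forces `I(b) − I(a) ≥ c √(a − b)`. So `T̃` is
continuous from the right at `b` (dominated convergence for `I`) and drops below `T̃(b)` just
to the right of `b`.
-/

open MeasureTheory Set Topology intervalIntegral

theorem sin_sq_sub_sin_sq_le (x y : ℝ) : sin y ^ 2 - sin x ^ 2 ≤ 2 * |y - x| := by
  have hadd : |sin y + sin x| ≤ 2 :=
    (abs_add_le _ _).trans (by linarith [abs_sin_le_one y, abs_sin_le_one x])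
  calc sin y ^ 2 - sin x ^ 2 = (sin y - sin x) * (sin y + sin x) := by ring
    _ ≤ |sin y - sin x| * |sin y + sin x| := by rw [← abs_mul]; exact le_abs_self _
    _ ≤ |y - x| * 2 := mul_le_mul (abs_sin_sub_sin_le y x) hadd (abs_nonneg _) (abs_nonneg _)
    _ = 2 * |y - x| := mul_comm _ _

theorem sin_sq_le_sin_sq {x y : ℝ} (hx : 0 ≤ x) (hxy : x ≤ y) (hy : y ≤ π / 2) :
    sin x ^ 2 ≤ sin y ^ 2 :=
  pow_le_pow_left₀ (sin_nonneg_of_nonneg_of_le_pi hx (by linarith [pi_pos]))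
    (sin_le_sin_of_le_of_le_pi_div_two (by linarith [pi_pos]) hy hxy) 2

theorem sin_sq_lt_sin_sq {x y : ℝ} (hx : 0 ≤ x) (hxy : x < y) (hy : y ≤ π / 2) :
    sin x ^ 2 < sin y ^ 2 :=
  pow_lt_pow_left₀ (strictMonoOn_sin ⟨by linarith [pi_pos], by linarith⟩ ⟨by linarith, hy⟩ hxy)
    (sin_nonneg_of_nonneg_of_le_pi hx (by linarith [pi_pos])) two_ne_zero

theorem sin_sq_lt_one {α : ℝ} (hα₀ : -(π / 2) < α) (hα : α < π / 2) : sin α ^ 2 < 1 := by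
  nlinarith [sin_sq_add_cos_sq α, cos_pos_of_mem_Ioo ⟨hα₀, hα⟩]

theorem abs_sin_mul_sin_lt_one {α : ℝ} (hα₀ : -(π / 2) < α) (hα : α < π / 2) (θ : ℝ) :
    |sin α * sin θ| < 1 := by
  rw [abs_mul]
  exact mul_lt_one_of_nonneg_of_lt_one_left (abs_nonneg _)
    ((sq_lt_one_iff_abs_lt_one _).mp (sin_sq_lt_one hα₀ hα)) (abs_sin_le_one θ)

theorem one_div_sqrt_sub_one_div_sqrt_le {u v : ℝ} (hv : 0 < v) (hvu : v ≤ u) :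
    1 / √v - 1 / √u ≤ (u - v) / (2 * v * √v) := by
  obtain ⟨p, hp, rfl⟩ : ∃ p, 0 < p ∧ v = p ^ 2 := ⟨√v, sqrt_pos.mpr hv, (sq_sqrt hv.le).symm⟩
  obtain ⟨q, hq, rfl⟩ : ∃ q, 0 < q ∧ u = q ^ 2 :=
    ⟨√u, sqrt_pos.mpr (hv.trans_le hvu), (sq_sqrt (hv.le.trans hvu)).symm⟩
  have hpq : 0 ≤ q - p := sub_nonneg.mpr ((pow_le_pow_iff_left₀ hp.le hq.le two_ne_zero).mp hvu)
  rw [sqrt_sq hp.le, sqrt_sq hq.le, div_sub_div _ _ hp.ne' hq.ne',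
    div_le_div_iff₀ (by positivity) (by positivity)]
  nlinarith [mul_nonneg hpq (mul_nonneg hp.le hpq),
    mul_nonneg (mul_nonneg hpq hpq) (mul_nonneg hp.le hq.le)]

theorem sub_div_le_one_div_sqrt_sub_one_div_sqrt {u v : ℝ} (hv : 0 < v) (hvu : v ≤ u) :
    (u - v) / (2 * u * √u) ≤ 1 / √v - 1 / √u := by
  obtain ⟨p, hp, rfl⟩ : ∃ p, 0 < p ∧ v = p ^ 2 := ⟨√v, sqrt_pos.mpr hv, (sq_sqrt hv.le).symm⟩
  obtain ⟨q, hq, rfl⟩ : ∃ q, 0 < q ∧ u = q ^ 2 :=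
    ⟨√u, sqrt_pos.mpr (hv.trans_le hvu), (sq_sqrt (hv.le.trans hvu)).symm⟩
  have hpq : 0 ≤ q - p := sub_nonneg.mpr ((pow_le_pow_iff_left₀ hp.le hq.le two_ne_zero).mp hvu)
  rw [sqrt_sq hp.le, sqrt_sq hq.le, div_sub_div _ _ hp.ne' hq.ne',
    div_le_div_iff₀ (by positivity) (by positivity)]
  nlinarith [mul_nonneg hpq (mul_nonneg hq.le hpq),
    mul_nonneg (mul_nonneg hpq hpq) (mul_nonneg hp.le hq.le)]

theorem eventually_mul_sub_lt_mul_sqrt_sub (C : ℝ) {k : ℝ} (hk : 0 < k) (b : ℝ) :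
    ∀ᶠ a in 𝓝[>] b, C * (a - b) < k * √(a - b) := by
  have hsqrt : Tendsto (fun a => C * √(a - b)) (𝓝[>] b) (𝓝 0) := by
    have : Continuous fun a => C * √(a - b) := by fun_prop
    simpa using (this.tendsto b).mono_left nhdsWithin_le_nhds
  filter_upwards [self_mem_nhdsWithin, hsqrt.eventually (gt_mem_nhds hk)] with a ha hlt
  calc C * (a - b) = C * √(a - b) * √(a - b) := by
        rw [mul_assoc, mul_self_sqrt (sub_pos.mpr ha).le]
    _ < k * √(a - b) := mul_lt_mul_of_pos_right hlt (sqrt_pos.mpr (sub_pos.mpr ha))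

theorem integral_one_div_sqrt_add_sq {c : ℝ} (hc : 0 < c) (L : ℝ) :
    ∫ t in (0:ℝ)..L, 1 / √(c + t ^ 2) = arsinh (L / √c) := by
  have hcont : Continuous fun t => 1 / √(c + t ^ 2) :=
    continuous_const.div (by fun_prop) fun t => (sqrt_pos.mpr (by positivity)).ne'
  have hderiv : ∀ t, HasDerivAt (fun t => arsinh (t / √c)) (1 / √(c + t ^ 2)) t := by
    intro t
    refine ((hasDerivAt_id t).div_const √c).arsinh.congr_deriv ?_
    have hsplit : √(c + t ^ 2) = √c * √(1 + (t / √c) ^ 2) := by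
      rw [← sqrt_mul hc.le, div_pow, sq_sqrt hc.le]
      congr 1
      field_simp
    rw [hsplit, smul_eq_mul, id]
    field_simp
  rw [integral_eq_sub_of_hasDerivAt (fun t _ => hderiv t) (hcont.intervalIntegrable _ _)]
  simp

/-- The complete elliptic integral of the first kind, in the parameter convention `m = k²`. -/
noncomputable def ellipticK (m : ℝ) : ℝ := ∫ θ in (0:ℝ)..π / 2, 1 / √(1 - m * sin θ ^ 2)

theorem one_sub_mul_sin_sq_pos {a : ℝ} (ha : a < 1) (θ : ℝ) : 0 < 1 - a * sin θ ^ 2 := by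
  have hs := sin_sq_le_one θ
  rcases le_or_gt a 0 with h | h
  · nlinarith [sq_nonneg (sin θ)]
  · nlinarith

theorem continuous_one_div_sqrt_one_sub_mul_sin_sq {a : ℝ} (ha : a < 1) :
    Continuous fun θ => 1 / √(1 - a * sin θ ^ 2) :=
  continuous_const.div (by fun_prop) fun θ => (sqrt_pos.mpr (one_sub_mul_sin_sq_pos ha θ)).ne'

theorem ellipticK_mono {a b : ℝ} (hba : b ≤ a) (ha : a < 1) : ellipticK b ≤ ellipticK a := by
  refine integral_mono_on (by positivity)
    ((continuous_one_div_sqrt_one_sub_mul_sin_sq (hba.trans_lt ha)).intervalIntegrable _ _)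
    ((continuous_one_div_sqrt_one_sub_mul_sin_sq ha).intervalIntegrable _ _) fun θ _ => ?_
  gcongr
  exact sqrt_pos.mpr (one_sub_mul_sin_sq_pos ha θ)

theorem ellipticK_sub_le {a b : ℝ} (hb₀ : 0 ≤ b) (hba : b ≤ a) (ha : a < (1 + b) / 2) :
    ellipticK a - ellipticK b ≤ π / 2 * ((a - b) / ((1 - b) * √((1 - b) / 2))) := by
  have hb : b < 1 := by linarith
  have hm : 0 < (1 - b) / 2 := by linarith
  set C := (a - b) / ((1 - b) * √((1 - b) / 2))
  have hK : ellipticK a ≤ ∫ θ in (0:ℝ)..π / 2, (1 / √(1 - b * sin θ ^ 2) + C) := by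
    refine integral_mono_on (by positivity)
      ((continuous_one_div_sqrt_one_sub_mul_sin_sq (by linarith)).intervalIntegrable _ _)
      (((continuous_one_div_sqrt_one_sub_mul_sin_sq hb).add continuous_const).intervalIntegrable
        _ _) fun θ _ => ?_
    have hs := sin_sq_le_one θ
    have hs₀ := sq_nonneg (sin θ)
    have hmv : (1 - b) / 2 ≤ 1 - a * sin θ ^ 2 := by nlinarith
    have hvu : 1 - a * sin θ ^ 2 ≤ 1 - b * sin θ ^ 2 := by nlinarith
    calc 1 / √(1 - a * sin θ ^ 2)
        ≤ 1 / √(1 - b * sin θ ^ 2) +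
            (1 - b * sin θ ^ 2 - (1 - a * sin θ ^ 2)) /
              (2 * (1 - a * sin θ ^ 2) * √(1 - a * sin θ ^ 2)) := by
          linarith [one_div_sqrt_sub_one_div_sqrt_le (hm.trans_le hmv) hvu]
      _ ≤ 1 / √(1 - b * sin θ ^ 2) + (a - b) / (2 * ((1 - b) / 2) * √((1 - b) / 2)) := by
          gcongr 1 / √(1 - b * sin θ ^ 2) + ?_
          have hnum := mul_nonneg (sub_nonneg.mpr hba) (sub_nonneg.mpr hs)
          exact div_le_div₀ (by linarith) (by nlinarith) (by positivity) (by gcongr; linarith)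
      _ = 1 / √(1 - b * sin θ ^ 2) + C := by congr 2; ring
  rw [integral_add ((continuous_one_div_sqrt_one_sub_mul_sin_sq hb).intervalIntegrable _ _)
    intervalIntegrable_const, intervalIntegral.integral_const, smul_eq_mul, sub_zero] at hK
  unfold ellipticK at hK ⊢
  linarith

theorem tendsto_ellipticK_nhdsGT {b : ℝ} (hb₀ : 0 ≤ b) (hb : b < 1) :
    Tendsto ellipticK (𝓝[>] b) (𝓝 (ellipticK b)) := by
  have hnear : Ioo b ((1 + b) / 2) ∈ 𝓝[>] b := Ioo_mem_nhdsGT (by linarith)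
  have hupper : Tendsto (fun a => ellipticK b + π / 2 * ((a - b) / ((1 - b) * √((1 - b) / 2))))
      (𝓝[>] b) (𝓝 (ellipticK b)) := by
    have : Continuous fun a => ellipticK b + π / 2 * ((a - b) / ((1 - b) * √((1 - b) / 2))) := by
      fun_prop
    simpa using (this.tendsto b).mono_left nhdsWithin_le_nhds
  refine tendsto_of_tendsto_of_tendsto_of_le_of_le' tendsto_const_nhds hupper ?_ ?_
  · filter_upwards [hnear] with a ha
    exact ellipticK_mono ha.1.le (by linarith [ha.2])
  · filter_upwards [hnear] with a ha
    linarith [ellipticK_sub_le hb₀ ha.1.le ha.2]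

theorem arsinh_le_ellipticK {a : ℝ} (ha : a < 1) : arsinh (π / 2 / √(1 - a)) ≤ ellipticK a := by
  have hc : 0 < 1 - a := by linarith
  have hcont : Continuous fun θ => 1 / √(1 - a + (π / 2 - θ) ^ 2) :=
    continuous_const.div (by fun_prop) fun θ => (sqrt_pos.mpr (by positivity)).ne'
  have hflip := integral_comp_sub_left (fun t => 1 / √(1 - a + t ^ 2)) (a := 0) (b := π / 2) (π / 2)
  rw [sub_self, sub_zero] at hflip
  rw [← integral_one_div_sqrt_add_sq hc, ← hflip]
  refine integral_mono_on (by positivity) (hcont.intervalIntegrable _ _)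
    ((continuous_one_div_sqrt_one_sub_mul_sin_sq ha).intervalIntegrable _ _) fun θ hθ => ?_
  have hcos : cos θ ≤ π / 2 - θ := by
    rw [← sin_pi_div_two_sub]; exact sin_le (by linarith [hθ.2])
  have hcos₀ : 0 ≤ cos θ := cos_nonneg_of_mem_Icc ⟨by linarith [hθ.1, pi_pos], hθ.2⟩
  gcongr
  · exact sqrt_pos.mpr (one_sub_mul_sin_sq_pos ha θ)
  · nlinarith [sin_sq_add_cos_sq θ, sin_sq_le_one θ]

theorem tendsto_ellipticK_nhdsLT_one : Tendsto ellipticK (𝓝[<] 1) atTop := by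
  have hsqrt : Tendsto (fun a => √(1 - a)) (𝓝[<] 1) (𝓝[>] 0) := by
    refine tendsto_nhdsWithin_of_tendsto_nhds_of_eventually_within _ ?_ ?_
    · have : Continuous fun a : ℝ => √(1 - a) := by fun_prop
      simpa using (this.tendsto 1).mono_left nhdsWithin_le_nhds
    · filter_upwards [self_mem_nhdsWithin] with a ha
      exact sqrt_pos.mpr (sub_pos.mpr ha)
  have harg : Tendsto (fun a => π / 2 / √(1 - a)) (𝓝[<] 1) atTop :=
    (tendsto_inv_nhdsGT_zero.comp hsqrt).const_mul_atTop (by positivity)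
  refine tendsto_atTop_mono' _ ?_ (sinhOrderIso.symm.tendsto_atTop.comp harg)
  filter_upwards [self_mem_nhdsWithin] with a ha
  exact arsinh_le_ellipticK ha

section PendulumSubstitution

variable {α : ℝ}

theorem strictMonoOn_arcsin_mul_sin (hα₀ : 0 < α) (hα : α < π / 2) :
    StrictMonoOn (fun θ => arcsin (sin α * sin θ)) (Icc 0 (π / 2)) := by
  have hsin : 0 < sin α := sin_pos_of_pos_of_lt_pi hα₀ (by linarith [pi_pos])
  refine strictMonoOn_arcsin.comp
    (fun x hx y hy hxy => mul_lt_mul_of_pos_left (strictMonoOn_sin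
      (Icc_subset_Icc (by linarith [pi_pos]) le_rfl hx)
      (Icc_subset_Icc (by linarith [pi_pos]) le_rfl hy) hxy) hsin) fun θ _ => ?_
  exact abs_le.mp (abs_sin_mul_sin_lt_one (by linarith) hα θ).le

theorem image_arcsin_mul_sin_Ioo (hα₀ : 0 < α) (hα : α < π / 2) :
    (fun θ => arcsin (sin α * sin θ)) '' Ioo 0 (π / 2) = Ioo 0 α := by
  rw [ContinuousOn.image_Ioo_of_strictMonoOn (by positivity) (by fun_prop)
    (strictMonoOn_arcsin_mul_sin hα₀ hα)]
  simp [arcsin_sin (by linarith) hα.le]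

theorem hasDerivAt_arcsin_mul_sin (hα₀ : -(π / 2) < α) (hα : α < π / 2) (θ : ℝ) :
    HasDerivAt (fun θ => arcsin (sin α * sin θ))
      (sin α * cos θ / √(1 - sin α ^ 2 * sin θ ^ 2)) θ := by
  have hlt := abs_lt.mp (abs_sin_mul_sin_lt_one hα₀ hα θ)
  refine ((hasDerivAt_arcsin hlt.1.ne' hlt.2.ne).comp θ
    ((hasDerivAt_sin θ).const_mul (sin α))).congr_deriv ?_
  rw [mul_pow]; ring

theorem abs_deriv_mul_pendulum_comp_arcsin_mul_sin (hα₀ : 0 < α) (hα : α < π / 2) {θ : ℝ}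
    (hθ : θ ∈ Ioo 0 (π / 2)) :
    |sin α * cos θ / √(1 - sin α ^ 2 * sin θ ^ 2)| *
        (1 / √(sin α ^ 2 - sin (arcsin (sin α * sin θ)) ^ 2)) =
      1 / √(1 - sin α ^ 2 * sin θ ^ 2) := by
  have hsin : 0 < sin α := sin_pos_of_pos_of_lt_pi hα₀ (by linarith [pi_pos])
  have hcos : 0 < cos θ := cos_pos_of_mem_Ioo ⟨by linarith [hθ.1], hθ.2⟩
  have hbound := abs_le.mp (abs_sin_mul_sin_lt_one (by linarith) hα θ).le
  rw [sin_arcsin hbound.1 hbound.2, abs_of_nonneg (by positivity),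
    show sin α ^ 2 - (sin α * sin θ) ^ 2 = (sin α * cos θ) ^ 2 by
      nlinarith [sin_sq_add_cos_sq θ], sqrt_sq (by positivity)]
  field_simp

theorem integrableOn_pendulum (hα₀ : 0 < α) (hα : α < π / 2) :
    IntegrableOn (fun x => 1 / √(sin α ^ 2 - sin x ^ 2)) (Ioo 0 α) := by
  rw [← image_arcsin_mul_sin_Ioo hα₀ hα,
    integrableOn_image_iff_integrableOn_abs_deriv_smul measurableSet_Ioo
      (fun θ _ => (hasDerivAt_arcsin_mul_sin (by linarith) hα θ).hasDerivWithinAt)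
      ((strictMonoOn_arcsin_mul_sin hα₀ hα).mono Ioo_subset_Icc_self).injOn]
  refine ((continuous_one_div_sqrt_one_sub_mul_sin_sq
    (sin_sq_lt_one (by linarith) hα)).integrableOn_Icc.mono_set Ioo_subset_Icc_self).congr_fun
    (fun θ hθ => ?_) measurableSet_Ioo
  exact (abs_deriv_mul_pendulum_comp_arcsin_mul_sin hα₀ hα hθ).symm

theorem intervalIntegrable_pendulum {l l' : ℝ} (hα₀ : 0 < α) (hα : α < π / 2)
    (hl : l ∈ uIcc 0 α) (hl' : l' ∈ uIcc 0 α) :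
    IntervalIntegrable (fun x => 1 / √(sin α ^ 2 - sin x ^ 2)) volume l l' :=
  ((intervalIntegrable_iff_integrableOn_Ioo_of_le hα₀.le).mpr
    (integrableOn_pendulum hα₀ hα)).mono_set (uIcc_subset_uIcc hl hl')

end PendulumSubstitution

noncomputable def pendulumIntegral (a l u : ℝ) : ℝ := ∫ x in l..u, 1 / √(a - sin x ^ 2)

theorem pendulumIntegral_eq_ellipticK {α : ℝ} (hα₀ : 0 < α) (hα : α < π / 2) :
    pendulumIntegral (sin α ^ 2) 0 α = ellipticK (sin α ^ 2) := by
  rw [pendulumIntegral, ellipticK, integral_of_le hα₀.le, integral_of_le (by positivity),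
    integral_Ioc_eq_integral_Ioo, integral_Ioc_eq_integral_Ioo, ← image_arcsin_mul_sin_Ioo hα₀ hα,
    integral_image_eq_integral_abs_deriv_smul measurableSet_Ioo
      (fun θ _ => (hasDerivAt_arcsin_mul_sin (by linarith) hα θ).hasDerivWithinAt)
      ((strictMonoOn_arcsin_mul_sin hα₀ hα).mono Ioo_subset_Icc_self).injOn]
  exact setIntegral_congr_fun measurableSet_Ioo fun θ hθ =>
    abs_deriv_mul_pendulum_comp_arcsin_mul_sin hα₀ hα hθ

theorem timeMapT1_eq (α φ : ℝ) : timeMapT1 α φ = 1 / √2 * pendulumIntegral (sin α ^ 2) 0 φ := by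
  rw [timeMapT1, pendulumIntegral, ← intervalIntegral.integral_const_mul]
  refine integral_congr fun x _ => ?_
  rw [show cos (2 * x) - cos (2 * α) = 2 * (sin α ^ 2 - sin x ^ 2) by
      rw [cos_two_mul, cos_two_mul, cos_sq', cos_sq']; ring,
    sqrt_mul zero_le_two, one_div_mul_one_div]

theorem timeMapTClTilde_sin_sq {φ₀ φ₁ : ℝ} (h₀ : 0 < φ₀) (h₀₁ : φ₀ < φ₁) (h₁ : φ₁ < π / 2) :
    timeMapTClTilde φ₀ φ₁ (sin φ₁ ^ 2) = 3 * timeMapT φ₁ - timeMapT1 φ₁ φ₀ := by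
  have hφ₁ := h₀.trans h₀₁
  have hmem : φ₀ ∈ uIcc 0 φ₁ := mem_uIcc_of_le h₀.le h₀₁.le
  have hsplit : pendulumIntegral (sin φ₁ ^ 2) 0 φ₀ + pendulumIntegral (sin φ₁ ^ 2) φ₀ φ₁ =
      pendulumIntegral (sin φ₁ ^ 2) 0 φ₁ :=
    integral_add_adjacent_intervals (intervalIntegrable_pendulum hφ₁ h₁ left_mem_uIcc hmem)
      (intervalIntegrable_pendulum hφ₁ h₁ hmem right_mem_uIcc)
  have hK := pendulumIntegral_eq_ellipticK hφ₁ h₁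
  have h2 : √2 ^ 2 = 2 := sq_sqrt zero_le_two
  rw [show timeMapT φ₁ = timeMapT1 φ₁ φ₁ from rfl, timeMapT1_eq, timeMapT1_eq]
  change √2 * ellipticK _ + 1 / √2 * pendulumIntegral _ φ₀ φ₁ = _
  field_simp
  linear_combination ellipticK (sin φ₁ ^ 2) * h2 - 2 * hK + hsplit

section PendulumIntegral

variable {l u : ℝ}

theorem tendsto_pendulumIntegral_nhdsGT (hl : 0 ≤ l) (hlu : l < u) (hu : u < π / 2) :
    Tendsto (fun a => pendulumIntegral a l u) (𝓝[>] (sin u ^ 2))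
      (𝓝 (pendulumIntegral (sin u ^ 2) l u)) := by
  have hsq_pos : ∀ x ∈ uIoc l u, x ≠ u → 0 < sin u ^ 2 - sin x ^ 2 := fun x hx hxu => by
    rw [uIoc_of_le hlu.le] at hx
    exact sub_pos.mpr (sin_sq_lt_sin_sq (hl.trans hx.1.le) (hx.2.lt_of_ne hxu) hu.le)
  unfold pendulumIntegral
  refine tendsto_integral_filter_of_dominated_convergence _
    (Eventually.of_forall fun a => (by fun_prop : Measurable _).aestronglyMeasurable) ?_
    (intervalIntegrable_pendulum (hl.trans_lt hlu) hu (mem_uIcc_of_le hl hlu.le) right_mem_uIcc)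
    ?_
  · filter_upwards [self_mem_nhdsWithin] with a ha
    filter_upwards [Measure.ae_ne volume u] with x hxu hx
    have hpos := hsq_pos x hx hxu
    rw [norm_of_nonneg (by positivity)]
    gcongr
    exact ha.le
  · filter_upwards [Measure.ae_ne volume u] with x hxu hx
    have hcont : ContinuousAt (fun a => 1 / √(a - sin x ^ 2)) (sin u ^ 2) :=
      continuousAt_const.div (by fun_prop) (sqrt_pos.mpr (hsq_pos x hx hxu)).ne'
    exact hcont.tendsto.mono_left nhdsWithin_le_nhds

theorem continuousOn_div_two_mul_self_mul_sqrt {δ : ℝ} (hδ : 0 < δ) (hlu : l ≤ u) :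
    ContinuousOn (fun x => δ / (2 * (2 * (u - x) + δ) * √(2 * (u - x) + δ))) (uIcc l u) := by
  refine ContinuousOn.div (by fun_prop) (by fun_prop) fun x hx => ?_
  rw [uIcc_of_le hlu] at hx
  have : 0 < 2 * (u - x) + δ := by linarith [hx.2]
  positivity

theorem integral_div_two_mul_self_mul_sqrt {δ : ℝ} (hδ : 0 < δ) (hlu : l ≤ u) :
    ∫ x in l..u, δ / (2 * (2 * (u - x) + δ) * √(2 * (u - x) + δ)) =
      √δ / 2 - δ / (2 * √(2 * (u - l) + δ)) := by
  have hderiv : ∀ x ∈ uIcc l u, HasDerivAt (fun x => δ / 2 * (√(2 * (u - x) + δ))⁻¹)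
      (δ / (2 * (2 * (u - x) + δ) * √(2 * (u - x) + δ))) x := by
    intro x hx
    rw [uIcc_of_le hlu] at hx
    have hw : 0 < 2 * (u - x) + δ := by linarith [hx.2]
    have hlin : HasDerivAt (fun x => 2 * (u - x) + δ) (-2) x := by
      simpa using (((hasDerivAt_id x).const_sub u).const_mul 2).add_const δ
    refine (((hlin.sqrt hw.ne').inv (sqrt_pos.mpr hw).ne').const_mul (δ / 2)).congr_deriv ?_
    rw [sq_sqrt hw.le]
    field_simp
  rw [integral_eq_sub_of_hasDerivAt hderiv
    (continuousOn_div_two_mul_self_mul_sqrt hδ hlu).intervalIntegrable,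
    sub_self, mul_zero, zero_add]
  have hsδ := sqrt_pos.mpr hδ
  field_simp
  linear_combination (mul_self_sqrt hδ.le).symm

/-- The tangent-line bound for `1 / √·` at `a - sin² x`, weakened through
`sin² u - sin² x ≤ 2 (u - x)` to a density with an explicit primitive. -/
theorem div_two_mul_self_mul_sqrt_le_one_div_sqrt_sub {a x : ℝ} (hx : 0 ≤ x) (hxu : x < u)
    (hu : u ≤ π / 2) (ha : sin u ^ 2 < a) :
    (a - sin u ^ 2) / (2 * (2 * (u - x) + (a - sin u ^ 2)) * √(2 * (u - x) + (a - sin u ^ 2))) ≤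
      1 / √(sin u ^ 2 - sin x ^ 2) - 1 / √(a - sin x ^ 2) := by
  have hv : 0 < sin u ^ 2 - sin x ^ 2 := sub_pos.mpr (sin_sq_lt_sin_sq hx hxu hu)
  have hvw : sin u ^ 2 - sin x ^ 2 ≤ 2 * (u - x) := by
    simpa [abs_of_pos (sub_pos.mpr hxu)] using sin_sq_sub_sin_sq_le x u
  calc (a - sin u ^ 2) / (2 * (2 * (u - x) + (a - sin u ^ 2)) * √(2 * (u - x) + (a - sin u ^ 2)))
      ≤ (a - sin x ^ 2 - (sin u ^ 2 - sin x ^ 2)) /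
          (2 * (a - sin x ^ 2) * √(a - sin x ^ 2)) := by
        rw [show a - sin x ^ 2 - (sin u ^ 2 - sin x ^ 2) = a - sin u ^ 2 by ring]
        have : 0 < a - sin x ^ 2 := by linarith
        gcongr <;> linarith
    _ ≤ _ := sub_div_le_one_div_sqrt_sub_one_div_sqrt hv (by linarith)

theorem le_pendulumIntegral_sub (hl : 0 ≤ l) (hlu : l < u) (hu : u < π / 2) {a : ℝ}
    (ha : sin u ^ 2 < a) :
    √(a - sin u ^ 2) / 2 - (a - sin u ^ 2) / (2 * √(2 * (u - l))) ≤
      pendulumIntegral (sin u ^ 2) l u - pendulumIntegral a l u := by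
  set δ := a - sin u ^ 2
  have hδ : 0 < δ := sub_pos.mpr ha
  have hint := intervalIntegrable_pendulum (hl.trans_lt hlu) hu (mem_uIcc_of_le hl hlu.le)
    right_mem_uIcc
  have hint_a : IntervalIntegrable (fun x => 1 / √(a - sin x ^ 2)) volume l u := by
    refine ContinuousOn.intervalIntegrable fun x hx => ?_
    rw [uIcc_of_le hlu.le] at hx
    have hpos : 0 < a - sin x ^ 2 := by linarith [sin_sq_le_sin_sq (hl.trans hx.1) hx.2 hu.le]
    have hcont : ContinuousAt (fun x => 1 / √(a - sin x ^ 2)) x :=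
      continuousAt_const.div (by fun_prop) (sqrt_pos.mpr hpos).ne'
    exact hcont.continuousWithinAt
  calc √δ / 2 - δ / (2 * √(2 * (u - l)))
      ≤ √δ / 2 - δ / (2 * √(2 * (u - l) + δ)) := by
        have : 0 < u - l := sub_pos.mpr hlu
        gcongr; linarith
    _ = ∫ x in l..u, δ / (2 * (2 * (u - x) + δ) * √(2 * (u - x) + δ)) :=
        (integral_div_two_mul_self_mul_sqrt hδ hlu.le).symm
    _ ≤ ∫ x in l..u, (1 / √(sin u ^ 2 - sin x ^ 2) - 1 / √(a - sin x ^ 2)) :=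
        integral_mono_on_of_le_Ioo hlu.le
          (continuousOn_div_two_mul_self_mul_sqrt hδ hlu.le).intervalIntegrable (hint.sub hint_a)
          fun x hx => div_two_mul_self_mul_sqrt_le_one_div_sqrt_sub (hl.trans hx.1.le) hx.2 hu.le ha
    _ = pendulumIntegral (sin u ^ 2) l u - pendulumIntegral a l u := integral_sub hint hint_a

end PendulumIntegral

section TimeMap

variable {φ₀ φ₁ : ℝ}

theorem tendsto_timeMapTClTilde_nhdsLT_one (h₀₁ : φ₀ ≤ φ₁) :
    Tendsto (timeMapTClTilde φ₀ φ₁) (𝓝[<] 1) atTop := by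
  refine tendsto_atTop_mono (fun a => ?_)
    (tendsto_ellipticK_nhdsLT_one.const_mul_atTop (sqrt_pos.mpr two_pos))
  change √2 * ellipticK a ≤ √2 * ellipticK a + 1 / √2 * pendulumIntegral a φ₀ φ₁
  exact le_add_of_nonneg_right
    (mul_nonneg (by positivity) (integral_nonneg h₀₁ fun x _ => by positivity))

theorem tendsto_timeMapTClTilde_nhdsGT (h₀ : 0 < φ₀) (h₀₁ : φ₀ < φ₁) (h₁ : φ₁ < π / 2) :
    Tendsto (timeMapTClTilde φ₀ φ₁) (𝓝[>] (sin φ₁ ^ 2))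
      (𝓝 (timeMapTClTilde φ₀ φ₁ (sin φ₁ ^ 2))) :=
  ((tendsto_ellipticK_nhdsGT (sq_nonneg _)
    (sin_sq_lt_one (by linarith) h₁)).const_mul √2).add
    ((tendsto_pendulumIntegral_nhdsGT h₀.le h₀₁ h₁).const_mul (1 / √2))

theorem eventually_timeMapTClTilde_lt (h₀ : 0 < φ₀) (h₀₁ : φ₀ < φ₁) (h₁ : φ₁ < π / 2) :
    ∀ᶠ a in 𝓝[>] (sin φ₁ ^ 2),
      timeMapTClTilde φ₀ φ₁ a < timeMapTClTilde φ₀ φ₁ (sin φ₁ ^ 2) := by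
  set b := sin φ₁ ^ 2
  have hb : b < 1 := sin_sq_lt_one (by linarith) h₁
  have hk : 0 < 1 / √2 / 2 := by positivity
  filter_upwards [Ioo_mem_nhdsGT (show b < (1 + b) / 2 by linarith),
    eventually_mul_sub_lt_mul_sqrt_sub (√2 * (π / 2) / ((1 - b) * √((1 - b) / 2)) +
      1 / √2 / (2 * √(2 * (φ₁ - φ₀)))) hk b] with a ha hsmall
  have hK := mul_le_mul_of_nonneg_left (ellipticK_sub_le (sq_nonneg _) ha.1.le ha.2)
    (sqrt_nonneg 2)
  have hI := mul_le_mul_of_nonneg_left (le_pendulumIntegral_sub h₀.le h₀₁ h₁ ha.1)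
    (by positivity : (0 : ℝ) ≤ 1 / √2)
  change √2 * ellipticK a + 1 / √2 * pendulumIntegral a φ₀ φ₁ <
    √2 * ellipticK b + 1 / √2 * pendulumIntegral b φ₀ φ₁
  linear_combination hK + hI + hsmall

end TimeMap

/-- For `0 < φ₀ < φ₁ < π/2`: `T̃_{C_ℓ}(ã) → +∞` as `ã → 1⁻`;
`T̃_{C_ℓ}(ã) → T^* = 3T(φ₁) − T₁(φ₁, φ₀)` as `ã → (sin²φ₁)⁺`; and there is
`ε > 0` with `T̃_{C_ℓ}(ã) < T^*` for all `ã ∈ (sin²φ₁, sin²φ₁ + ε)`. -/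
theorem timeMapTClTilde_limits (φ₀ φ₁ : ℝ) (h₀ : 0 < φ₀) (h₀₁ : φ₀ < φ₁)
    (h₁ : φ₁ < π / 2) :
    Tendsto (timeMapTClTilde φ₀ φ₁) (nhdsWithin 1 (Set.Iio 1)) atTop ∧
    Tendsto (timeMapTClTilde φ₀ φ₁)
      (nhdsWithin (Real.sin φ₁ ^ 2) (Set.Ioi (Real.sin φ₁ ^ 2)))
      (nhds (3 * timeMapT φ₁ - timeMapT1 φ₁ φ₀)) ∧
    ∃ ε > 0, ∀ a ∈ Set.Ioo (Real.sin φ₁ ^ 2) (Real.sin φ₁ ^ 2 + ε),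
      timeMapTClTilde φ₀ φ₁ a < 3 * timeMapT φ₁ - timeMapT1 φ₁ φ₀ := by
  rw [← timeMapTClTilde_sin_sq h₀ h₀₁ h₁]
  obtain ⟨c, hc, hlt⟩ :=
    mem_nhdsGT_iff_exists_Ioo_subset.mp (eventually_timeMapTClTilde_lt h₀ h₀₁ h₁)
  refine ⟨tendsto_timeMapTClTilde_nhdsLT_one h₀₁.le, tendsto_timeMapTClTilde_nhdsGT h₀ h₀₁ h₁,
    c - sin φ₁ ^ 2, sub_pos.mpr hc, fun a ha => hlt ?_⟩
  rwa [add_sub_cancel] at ha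
end
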